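/- (Intermediate claim in the proof of Theorem 1) Let a monotone collision-free motion plan for M(φ) have distance cost d*(M(φ)), and let R⁺ denote the set of literal agents that move after the last clause agent moves. Then for every variable α of φ, R⁺ cannot contain both a literal agent of a positive occurrence of α and a literal agent of a negative occurrence of α. -/

import Mathlib

/-- A MAPF instance: an undirected graph, a finite set of agents,
and for each agent a start and a goal vertex, with starts pairwise distinct
and goals pairwise distinct. -/
structure MAPF where
  V : Type
  G : SimpleGraph V
  A : Type
  fintypeA : Fintype A
  s : A → V
  t : A → V
  s_inj : Function.Injective s
  t_inj : Function.Injective t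

attribute [instance] MAPF.fintypeA

/-- A feasible trajectory for agent `r`. -/
def MAPF.IsTrajectory (M : MAPF) (r : M.A) (π : ℕ → M.V) : Prop :=
  π 0 = M.s r ∧
  (∃ T : ℕ, ∀ τ : ℕ, T ≤ τ → π τ = M.t r) ∧
  (∀ τ : ℕ, 0 < τ → π (τ - 1) = π τ ∨ M.G.Adj (π (τ - 1)) (π τ))

/-- Length of the induced path `P(r)` (trajectory with consecutive repetitions
compressed): the number of time steps at which the vertex changes. -/
noncomputable def pathLength {V : Type} (π : ℕ → V) : ℕ :=
  {τ : ℕ | 0 < τ ∧ π (τ - 1) ≠ π τ}.ncard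

/-- A motion plan: one trajectory per agent. -/
def MAPF.IsPlan (M : MAPF) (π : M.A → ℕ → M.V) : Prop :=
  ∀ r : M.A, M.IsTrajectory r (π r)

/-- Collision-free: no two agents share a vertex at a time step, and no two agents
traverse the same edge in opposite directions at the same time step. -/
def MAPF.CollisionFree (M : MAPF) (π : M.A → ℕ → M.V) : Prop :=
  ∀ r r' : M.A, r ≠ r' →
    (∀ τ : ℕ, π r τ ≠ π r' τ) ∧
    (∀ τ : ℕ, 0 < τ → ¬(π r (τ - 1) = π r' τ ∧ π r τ = π r' (τ - 1)))

/-- Distance cost of a motion plan: sum of the path lengths of the agents. -/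
noncomputable def MAPF.cost (M : MAPF) (π : M.A → ℕ → M.V) : ℕ :=
  ∑ r : M.A, pathLength (π r)

/-- `d*(M)`: sum over agents of the graph distance from start to goal. -/
noncomputable def MAPF.dStar (M : MAPF) : ℕ :=
  ∑ r : M.A, M.G.dist (M.s r) (M.t r)

open scoped Classical in
/-- The active interval of an agent: from the first time it leaves its start to
the last time it reaches its target; empty if the agent never moves. -/
noncomputable def MAPF.activeInterval (M : MAPF) (r : M.A) (π : ℕ → M.V) : Set ℕ :=
  if {τ : ℕ | π (τ + 1) ≠ M.s r} = ∅ then ∅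
  else Set.Icc (sInf {τ : ℕ | π (τ + 1) ≠ M.s r})
               (sSup {τ : ℕ | 0 < τ ∧ π (τ - 1) ≠ M.t r})

/-- A monotone motion plan: the active intervals of distinct agents are pairwise
disjoint (the agents move one by one, each moving once). -/
def MAPF.MonotonePlan (M : MAPF) (π : M.A → ℕ → M.V) : Prop :=
  ∀ r r' : M.A, r ≠ r' →
    Disjoint (M.activeInterval r (π r)) (M.activeInterval r' (π r'))

/-- A sequential motion plan: at each time step at most one agent changes vertex. -/
def MAPF.SequentialPlan (M : MAPF) (π : M.A → ℕ → M.V) : Prop :=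
  ∀ τ : ℕ, 0 < τ → ∀ r r' : M.A,
    π r (τ - 1) ≠ π r τ → π r' (τ - 1) ≠ π r' τ → r = r'

/-- A literal: a variable index together with a polarity. -/
structure Lit where
  var : ℕ
  positive : Bool
deriving DecidableEq

/-- Evaluation of a literal under an assignment. -/
def Lit.eval (a : ℕ → Bool) (l : Lit) : Bool :=
  if l.positive then a l.var else !(a l.var)

/-- A 3-clause: three literals. -/
abbrev Clause3 := Lit × Lit × Lit

def Clause3.eval (a : ℕ → Bool) (c : Clause3) : Bool :=
  c.1.eval a || c.2.1.eval a || c.2.2.eval a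

/-- A 3-CNF formula: a list of 3-clauses. -/
abbrev CNF3 := List Clause3

def CNF3.Satisfies (a : ℕ → Bool) (φ : CNF3) : Prop :=
  ∀ c ∈ φ, c.eval a = true

def CNF3.Satisfiable (φ : CNF3) : Prop :=
  ∃ a : ℕ → Bool, CNF3.Satisfies a φ

/-- The literal at occurrence `(j, i)`: position `i` of clause `j`. -/
def CNF3.litAt (φ : CNF3) (j : Fin φ.length) (i : Fin 3) : Lit :=
  if i = 0 then (φ.get j).1 else if i = 1 then (φ.get j).2.1 else (φ.get j).2.2

/-- The set of variables of a 3-CNF formula. -/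
def CNF3.vars (φ : CNF3) : Finset ℕ :=
  ((φ.map fun c => [c.1.var, c.2.1.var, c.2.2.var]).flatten).toFinset

lemma CNF3.litAt_var_mem (φ : CNF3) (j : Fin φ.length) (i : Fin 3) :
    (φ.litAt j i).var ∈ φ.vars := by
  have hc : φ.get j ∈ φ := List.get_mem φ j
  simp only [CNF3.vars, List.mem_toFinset, List.mem_flatten, List.mem_map]
  refine ⟨[(φ.get j).1.var, (φ.get j).2.1.var, (φ.get j).2.2.var], ⟨φ.get j, hc, rfl⟩, ?_⟩
  unfold CNF3.litAt
  fin_cases i <;> simp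

/-- The variables of `φ`, as a type (one per variable gadget / blocker agent). -/
abbrev CNF3.Vars (φ : CNF3) : Type := {n : ℕ // n ∈ φ.vars}

/-- Cells of the planar integer grid. -/
abbrev Cell := ℤ × ℤ

/-- The grid graph on a finite set of cells: two cells are adjacent iff their
L¹-distance is 1. -/
def gridGraph (cells : Finset Cell) : SimpleGraph {c : Cell // c ∈ cells} where
  Adj u v := (u.1.1 - v.1.1).natAbs + (u.1.2 - v.1.2).natAbs = 1
  symm := by
    constructor
    intro u v h
    omega
  loopless := by constructor; intro u h; simp at h

/-- The agents of the monotone construction `M(φ)`: one clause agent per clause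
(`Sum.inl`), and one literal agent per literal occurrence (`Sum.inr`). -/
abbrev MonoAgents (φ : CNF3) : Type := Fin φ.length ⊕ (Fin φ.length × Fin 3)

/-- The construction `M(φ)` of the paper (monotone case): a MAPF instance on a
grid graph with 3 rows, built from a room with the clause agents' starts, a
variable gadget for each variable (with two internally disjoint equal-length
shortest entrance-to-exit traversal paths, the top one carrying the starts of
the positive literal agents and the bottom one the starts of the negative
literal agents), and a clause gadget for each clause (its middle row carrying
the targets of the clause's three literal agents and its top row the target of
the clause agent, followed by an empty column that lets the clause agent reach
its target, via a strictly longer path, even when all three literal targets are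
occupied). -/
structure MonoConstruction (φ : CNF3) where
  /-- the cells of the grid graph -/
  cells : Finset Cell
  /-- the grid has 3 rows -/
  threeRows : ∀ c ∈ cells, 0 ≤ c.2 ∧ c.2 ≤ 2
  /-- start/target of the clause agents -/
  sC : Fin φ.length → {c : Cell // c ∈ cells}
  tC : Fin φ.length → {c : Cell // c ∈ cells}
  /-- start/target of the literal agents -/
  sL : Fin φ.length × Fin 3 → {c : Cell // c ∈ cells}
  tL : Fin φ.length × Fin 3 → {c : Cell // c ∈ cells}
  /-- starts are pairwise distinct -/
  starts_inj : Function.Injective (Sum.elim sC sL)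
  /-- targets are pairwise distinct -/
  targets_inj : Function.Injective (Sum.elim tC tL)
  /-- the one-cell entrance of each variable gadget -/
  entrance : φ.Vars → {c : Cell // c ∈ cells}
  /-- the one-cell exit of each variable gadget -/
  exitC : φ.Vars → {c : Cell // c ∈ cells}
  /-- the top traversal path of each variable gadget -/
  topWalk : (v : φ.Vars) → (gridGraph cells).Walk (entrance v) (exitC v)
  /-- the bottom traversal path of each variable gadget -/
  botWalk : (v : φ.Vars) → (gridGraph cells).Walk (entrance v) (exitC v)
  top_isPath : ∀ v, (topWalk v).IsPath
  bot_isPath : ∀ v, (botWalk v).IsPath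
  /-- the top path is a shortest entrance-to-exit path -/
  top_shortest : ∀ v, (topWalk v).length = (gridGraph cells).dist (entrance v) (exitC v)
  /-- the bottom path is a shortest entrance-to-exit path, of the same length -/
  bot_shortest : ∀ v, (botWalk v).length = (gridGraph cells).dist (entrance v) (exitC v)
  /-- the two traversal paths are internally disjoint -/
  internal_disjoint : ∀ v c, c ∈ (topWalk v).support → c ∈ (botWalk v).support →
    c = entrance v ∨ c = exitC v
  /-- the top path runs along the top row of the grid -/
  top_row : ∀ v c, c ∈ (topWalk v).support → c ≠ entrance v → c ≠ exitC v → c.1.2 = 2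
  /-- these are the only two shortest entrance-to-exit traversal paths -/
  two_paths : ∀ v (p : (gridGraph cells).Walk (entrance v) (exitC v)), p.IsPath →
    p.length = (gridGraph cells).dist (entrance v) (exitC v) →
    p = topWalk v ∨ p = botWalk v
  /-- starts of positive literal agents lie on the top path of their variable's gadget -/
  pos_start_on_top : ∀ (j : Fin φ.length) (i : Fin 3), (φ.litAt j i).positive = true →
    sL (j, i) ∈ (topWalk ⟨(φ.litAt j i).var, φ.litAt_var_mem j i⟩).support
  /-- starts of negative literal agents lie on the bottom path of their variable's gadget -/
  neg_start_on_bot : ∀ (j : Fin φ.length) (i : Fin 3), (φ.litAt j i).positive = false →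
    sL (j, i) ∈ (botWalk ⟨(φ.litAt j i).var, φ.litAt_var_mem j i⟩).support
  /-- literal agents' targets are on the middle row (of their clause's gadget) -/
  tL_middleRow : ∀ o, (tL o).1.2 = 1
  /-- clause agents' targets are on the top row (of their clause's gadget) -/
  tC_topRow : ∀ j, (tC j).1.2 = 2
  /-- every shortest path of a clause agent traverses every variable gadget,
  entering at its entrance and leaving at its exit -/
  clause_shortest_traverses : ∀ (j : Fin φ.length) (v : φ.Vars)
    (p : (gridGraph cells).Walk (sC j) (tC j)),
    p.length = (gridGraph cells).dist (sC j) (tC j) →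
    entrance v ∈ p.support ∧ exitC v ∈ p.support
  /-- the empty column: each clause agent can reach its target (via a strictly
  longer path) even when the three literal targets of its clause gadget are occupied -/
  detour : ∀ j : Fin φ.length, ∃ p : (gridGraph cells).Walk (sC j) (tC j),
    (gridGraph cells).dist (sC j) (tC j) < p.length ∧ ∀ i : Fin 3, tL (j, i) ∉ p.support

/-- The MAPF instance determined by the construction `M(φ)`. -/
def MonoConstruction.toMAPF {φ : CNF3} (K : MonoConstruction φ) : MAPF where
  V := {c : Cell // c ∈ K.cells}
  G := gridGraph K.cells
  A := MonoAgents φ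
  fintypeA := inferInstance
  s := Sum.elim K.sC K.sL
  t := Sum.elim K.tC K.tL
  s_inj := K.starts_inj
  t_inj := K.targets_inj

/-- `f` moves at time `τ` (changes vertex from `τ - 1` to `τ`). -/
def IsMoveAt {V : Type} (f : ℕ → V) (τ : ℕ) : Prop := 0 < τ ∧ f (τ - 1) ≠ f τ

/-- The literal agent `o` moves (strictly) after the last clause agent moves. -/
def MovesAfterClauseAgents {φ : CNF3} (K : MonoConstruction φ)
    (π : K.toMAPF.A → ℕ → K.toMAPF.V) (o : Fin φ.length × Fin 3) : Prop :=
  ∀ (j : Fin φ.length) (τ τ' : ℕ),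
    IsMoveAt (π (Sum.inl j)) τ → IsMoveAt (π (Sum.inr o)) τ' → τ < τ'

/-!
The clause agent of any clause follows a shortest path, which must cross the gadget of `α`
along one of its two shortest traversal paths, i.e. through the starts of all positive or of
all negative literal agents of `α`. A literal agent that only moves after every move of the
clause agent is still on its start when the clause agent arrives there, or is already on it
when the clause agent has come to rest; either way the two agents collide.
-/

open SimpleGraph

section Trajectory

variable {V : Type} {G : SimpleGraph V}

lemma apply_eq_of_forall_not_isMoveAt {f : ℕ → V} {a b : ℕ} (hab : a ≤ b)
    (h : ∀ ρ, a < ρ → ρ ≤ b → ¬ IsMoveAt f ρ) : f b = f a := by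
  induction b, hab using Nat.le_induction with
  | base => rfl
  | succ b hab ih =>
    have hstay : f b = f (b + 1) := by
      by_contra hne
      exact h (b + 1) (by omega) le_rfl ⟨b.succ_pos, hne⟩
    rw [← hstay, ih fun ρ h₁ h₂ => h ρ h₁ (by omega)]

lemma exists_apply_eq_of_isMoveAt_lt {f g : ℕ → V} {σ : ℕ}
    (hbefore : ∀ τ τ', IsMoveAt f τ → IsMoveAt g τ' → τ < τ') (hσ : f σ = g 0) :
    ∃ τ, f τ = g τ := by
  classical
  by_cases hmove : ∃ ρ, IsMoveAt g ρ ∧ ρ ≤ σ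
  · have hfirst := Nat.find_spec hmove
    -- just before its first move, `g` is still on its start and `f` has already come to rest
    refine ⟨Nat.find hmove - 1, ?_⟩
    have hg : g (Nat.find hmove - 1) = g 0 :=
      apply_eq_of_forall_not_isMoveAt (Nat.zero_le _) fun ρ _ hρ hgρ =>
        Nat.find_min hmove (by omega) ⟨hgρ, by omega⟩
    have hf : f σ = f (Nat.find hmove - 1) :=
      apply_eq_of_forall_not_isMoveAt (by omega) fun ρ hρ _ hfρ => by
        have := hbefore ρ _ hfρ hfirst.1
        omega
    rw [hg, ← hf, hσ]
  · exact ⟨σ, hσ.trans (apply_eq_of_forall_not_isMoveAt (Nat.zero_le σ)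
      fun ρ _ hρ hgρ => hmove ⟨ρ, hgρ, hρ⟩).symm⟩

open scoped Classical in
lemma exists_walk_length_eq_card_moves (f : ℕ → V)
    (hstep : ∀ τ, 0 < τ → f (τ - 1) = f τ ∨ G.Adj (f (τ - 1)) (f τ)) (T : ℕ) :
    ∃ w : G.Walk (f 0) (f T),
      w.length = ((Finset.Icc 1 T).filter fun τ => f (τ - 1) ≠ f τ).card ∧
      ∀ x ∈ w.support, x ∈ Set.range f := by
  induction T with
  | zero => exact ⟨.nil, rfl, by simp⟩
  | succ T ih =>
    obtain ⟨w, hlen, hsupp⟩ := ih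
    have hIcc : Finset.Icc 1 (T + 1) = insert (T + 1) (Finset.Icc 1 T) := by
      ext x; simp only [Finset.mem_Icc, Finset.mem_insert]; omega
    rw [hIcc, Finset.filter_insert, Nat.add_sub_cancel]
    rcases Nat.add_sub_cancel T 1 ▸ hstep (T + 1) T.succ_pos with hstay | hadj
    · refine ⟨w.copy rfl hstay, ?_, ?_⟩
      · rw [Walk.length_copy, hlen, if_neg (not_not.2 hstay)]
      · simpa only [Walk.support_copy] using hsupp
    · refine ⟨w.concat hadj, ?_, ?_⟩
      · rw [Walk.length_concat, hlen, if_pos hadj.ne,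
          Finset.card_insert_of_notMem (by simp)]
      · intro x hx
        rcases List.mem_append.1 (Walk.support_concat w hadj ▸ hx) with hx | hx
        · exact hsupp x hx
        · exact ⟨T + 1, (List.mem_singleton.1 hx).symm⟩

open scoped Classical in
lemma pathLength_eq_card_moves {f : ℕ → V} {c : V} {T : ℕ} (hT : ∀ τ, T ≤ τ → f τ = c) :
    pathLength f = ((Finset.Icc 1 T).filter fun τ => f (τ - 1) ≠ f τ).card := by
  rw [pathLength, ← Set.ncard_coe_finset]
  congr 1
  ext τ
  simp only [Set.mem_ofPred_eq, Finset.coe_filter, Finset.mem_Icc]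
  refine ⟨fun ⟨hpos, hne⟩ => ⟨⟨hpos, ?_⟩, hne⟩, fun ⟨⟨hpos, _⟩, hne⟩ => ⟨hpos, hne⟩⟩
  by_contra hτ
  exact hne (by rw [hT (τ - 1) (by omega), hT τ (by omega)])

end Trajectory

lemma SimpleGraph.Walk.exists_walk_length_eq_dist_of_mem_support {V : Type}
    {G : SimpleGraph V} {s t a b : V} (p : G.Walk s t) (hp : p.length = G.dist s t)
    (ha : a ∈ p.support) (hb : b ∈ p.support) :
    ∃ q : G.Walk a b, q.length = G.dist a b ∧ q.support ⊆ p.support := by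
  classical
  have hb' : b ∈ (p.takeUntil a ha).support ∨ b ∈ (p.dropUntil a ha).support := by
    rwa [← Walk.mem_support_append_iff, p.take_spec ha]
  rcases hb' with hb | hb
  · have hsub := (Walk.isSubwalk_dropUntil _ hb).trans (p.isSubwalk_takeUntil ha)
    refine ⟨((p.takeUntil a ha).dropUntil b hb).reverse, ?_, ?_⟩
    · rw [Walk.length_reverse, length_eq_dist_of_subwalk hp hsub, dist_comm]
    · simpa only [Walk.support_reverse, List.reverse_subset] using hsub.support_subset
  · have hsub := (Walk.isSubwalk_takeUntil _ hb).trans (p.isSubwalk_dropUntil ha)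
    exact ⟨_, length_eq_dist_of_subwalk hp hsub, hsub.support_subset⟩

namespace MAPF

variable {M : MAPF} {π : M.A → ℕ → M.V}

lemma IsTrajectory.exists_walk {r : M.A} {f : ℕ → M.V} (hf : M.IsTrajectory r f) :
    ∃ w : M.G.Walk (M.s r) (M.t r),
      w.length = pathLength f ∧ ∀ x ∈ w.support, x ∈ Set.range f := by
  obtain ⟨hstart, ⟨T, hT⟩, hstep⟩ := hf
  obtain ⟨w, hlen, hsupp⟩ := exists_walk_length_eq_card_moves (G := M.G) f hstep T
  refine ⟨w.copy hstart (hT T le_rfl), ?_, ?_⟩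
  · rw [Walk.length_copy, hlen, pathLength_eq_card_moves hT]
  · simpa only [Walk.support_copy] using hsupp

lemma pathLength_eq_dist_of_cost_eq_dStar (hplan : M.IsPlan π) (hopt : M.cost π = M.dStar)
    (r : M.A) : pathLength (π r) = M.G.dist (M.s r) (M.t r) := by
  have hle : ∀ r, M.G.dist (M.s r) (M.t r) ≤ pathLength (π r) := fun r => by
    obtain ⟨w, hlen, -⟩ := (hplan r).exists_walk
    exact hlen ▸ dist_le w
  exact ((Finset.sum_eq_sum_iff_of_le fun r _ => hle r).1 hopt.symm r (Finset.mem_univ r)).symm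

lemma exists_shortest_walk_of_cost_eq_dStar (hplan : M.IsPlan π)
    (hopt : M.cost π = M.dStar) (r : M.A) :
    ∃ w : M.G.Walk (M.s r) (M.t r),
      w.length = M.G.dist (M.s r) (M.t r) ∧ ∀ x ∈ w.support, x ∈ Set.range (π r) := by
  obtain ⟨w, hlen, hsupp⟩ := (hplan r).exists_walk
  exact ⟨w, hlen.trans (pathLength_eq_dist_of_cost_eq_dStar hplan hopt r), hsupp⟩

end MAPF

namespace MonoConstruction

variable {φ : CNF3} (K : MonoConstruction φ) {π : K.toMAPF.A → ℕ → K.toMAPF.V}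

lemma support_topWalk_or_botWalk_subset_range (hplan : K.toMAPF.IsPlan π)
    (hopt : K.toMAPF.cost π = K.toMAPF.dStar) (j : Fin φ.length) (v : φ.Vars) :
    (∀ x ∈ (K.topWalk v).support, x ∈ Set.range (π (.inl j))) ∨
      ∀ x ∈ (K.botWalk v).support, x ∈ Set.range (π (.inl j)) := by
  obtain ⟨w, hlen, hsupp⟩ := K.toMAPF.exists_shortest_walk_of_cost_eq_dStar hplan hopt (.inl j)
  obtain ⟨hent, hexit⟩ := K.clause_shortest_traverses j v w hlen
  obtain ⟨q, hqlen, hqsupp⟩ := w.exists_walk_length_eq_dist_of_mem_support hlen hent hexit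
  rcases K.two_paths v q (q.isPath_of_length_eq_dist hqlen) hqlen with rfl | rfl
  · exact .inl fun x hx => hsupp x (hqsupp hx)
  · exact .inr fun x hx => hsupp x (hqsupp hx)

lemma sL_notMem_range_clause_of_movesAfterClauseAgents (hplan : K.toMAPF.IsPlan π)
    (hcf : K.toMAPF.CollisionFree π) {o : Fin φ.length × Fin 3}
    (ho : MovesAfterClauseAgents K π o) (j : Fin φ.length) :
    K.sL o ∉ Set.range (π (.inl j)) := by
  rintro ⟨σ, hσ⟩
  obtain ⟨τ, hτ⟩ := exists_apply_eq_of_isMoveAt_lt (ho j) (hσ.trans (hplan (.inr o)).1.symm)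
  exact (hcf _ _ Sum.inl_ne_inr).1 τ hτ

end MonoConstruction

theorem no_opposite_literals_move_after_clause_agents_general (φ : CNF3)
    (K : MonoConstruction φ) (π : K.toMAPF.A → ℕ → K.toMAPF.V)
    (hplan : K.toMAPF.IsPlan π) (hcf : K.toMAPF.CollisionFree π)
    (hopt : K.toMAPF.cost π = K.toMAPF.dStar) :
    ∀ α : ℕ, ¬ ∃ o o' : Fin φ.length × Fin 3,
      MovesAfterClauseAgents K π o ∧ MovesAfterClauseAgents K π o' ∧
      (φ.litAt o.1 o.2).var = α ∧ (φ.litAt o.1 o.2).positive = true ∧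
      (φ.litAt o'.1 o'.2).var = α ∧ (φ.litAt o'.1 o'.2).positive = false := by
  rintro α ⟨o, o', ho, ho', rfl, hpos, hvar', hneg⟩
  have hgadget : (⟨_, φ.litAt_var_mem o'.1 o'.2⟩ : φ.Vars) = ⟨_, φ.litAt_var_mem o.1 o.2⟩ :=
    Subtype.ext hvar'
  have htop := K.pos_start_on_top o.1 o.2 hpos
  have hbot := hgadget ▸ K.neg_start_on_bot o'.1 o'.2 hneg
  rcases K.support_topWalk_or_botWalk_subset_range hplan hopt o.1 ⟨_, φ.litAt_var_mem o.1 o.2⟩ with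
    hrange | hrange
  · exact K.sL_notMem_range_clause_of_movesAfterClauseAgents hplan hcf ho o.1 (hrange _ htop)
  · exact K.sL_notMem_range_clause_of_movesAfterClauseAgents hplan hcf ho' o.1 (hrange _ hbot)

/-- intermediate claim in the proof of Theorem 1: in a monotone
collision-free motion plan for `M(φ)` of cost `d*(M(φ))`, the set `R⁺` of literal
agents that move after the last clause agent moves cannot contain, for any
variable `α`, both an agent of a positive occurrence of `α` and an agent of a
negative occurrence of `α`. -/
theorem no_opposite_literals_move_after_clause_agents (φ : CNF3)
    (K : MonoConstruction φ) (π : K.toMAPF.A → ℕ → K.toMAPF.V)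
    (hplan : K.toMAPF.IsPlan π) (hcf : K.toMAPF.CollisionFree π)
    (hmono : K.toMAPF.MonotonePlan π)
    (hopt : K.toMAPF.cost π = K.toMAPF.dStar) :
    ∀ α : ℕ, ¬ ∃ o o' : Fin φ.length × Fin 3,
      MovesAfterClauseAgents K π o ∧ MovesAfterClauseAgents K π o' ∧
      (φ.litAt o.1 o.2).var = α ∧ (φ.litAt o.1 o.2).positive = true ∧
      (φ.litAt o'.1 o'.2).var = α ∧ (φ.litAt o'.1 o'.2).positive = false :=
  no_opposite_literals_move_after_clause_agents_general φ K π hplan hcf hopt
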